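/- arXiv:2106.14142 — 3 statements merged into one kernel-verified Lean document; each statement's English description precedes it below -/
import Mathlib

section
/- For every integer n ≥ 3, ((n+2)/(n + 2^{−n−1}))·((n + 2^{n+2} + 3·2^{−n−1} − 4)/(n + 2^{n+2} + 2)) ≥ (1 + 1/n)·(1 − 1/2^{n−1}) ≥ 1. -/
/-!
With `q = 2^(n-1)` we have `2^(n+2) = 8q` and `2^(-n-1) = 1/(4q)`, and the left-hand product
dominates the right-hand one factor by factor: `(n+2)/(n+1/(4q)) ≥ 1 + 1/n` and
`(n+8q+3/(4q)-4)/(n+8q+2) ≥ 1 - 1/q`, each by clearing denominators. The second inequality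
amounts to `n + 1 ≤ q`.
-/

lemma Nat.add_one_le_two_pow_sub_one {n : ℕ} (hn : 3 ≤ n) : n + 1 ≤ 2 ^ (n - 1) := by
  induction n, hn using Nat.le_induction with
  | base => norm_num
  | succ k hk ih =>
    rw [show k + 1 - 1 = k - 1 + 1 by omega, pow_succ]
    omega

lemma one_le_one_add_one_div_mul_one_sub_one_div {x q : ℝ} (hx : 0 < x) (hxq : x + 1 ≤ q) :
    1 ≤ (1 + 1 / x) * (1 - 1 / q) := by
  have hq : 0 < q := by linarith
  rw [one_add_div hx.ne', one_sub_div hq.ne', div_mul_div_comm, one_le_div (by positivity)]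
  nlinarith

lemma one_add_one_div_le_add_two_div_add {x e : ℝ} (hx : 0 < x) (he : 0 ≤ e)
    (hex : e * (x + 1) ≤ x) : 1 + 1 / x ≤ (x + 2) / (x + e) := by
  rw [one_add_div hx.ne', div_le_div_iff₀ hx (by positivity)]
  nlinarith

lemma one_sub_one_div_le_div {x q e : ℝ} (hx : 0 ≤ x) (hq : 0 < q) (he : 0 ≤ e) :
    1 - 1 / q ≤ (x + 8 * q + 3 * e - 4) / (x + 8 * q + 2) := by
  rw [one_sub_div hq.ne', div_le_div_iff₀ hq (by positivity)]
  nlinarith [mul_nonneg he hq.le]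

/-- For every integer `n ≥ 3`,
    `((n+2)/(n+2^{-n-1})) · ((n+2^{n+2}+3·2^{-n-1}-4)/(n+2^{n+2}+2))
       ≥ (1+1/n)(1-1/2^{n-1}) ≥ 1`. -/
theorem ratio_ge_one (n : ℕ) (hn : 3 ≤ n) :
    (((n : ℝ) + 2) / ((n : ℝ) + (2 : ℝ) ^ (-(n : ℤ) - 1))) *
        (((n : ℝ) + 2 ^ (n + 2) + 3 * (2 : ℝ) ^ (-(n : ℤ) - 1) - 4) /
          ((n : ℝ) + 2 ^ (n + 2) + 2))
      ≥ (1 + 1 / (n : ℝ)) * (1 - 1 / 2 ^ (n - 1)) ∧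
    (1 + 1 / (n : ℝ)) * (1 - 1 / 2 ^ (n - 1)) ≥ 1 := by
  have hpow : (2 : ℝ) ^ (n + 2) = 8 * 2 ^ (n - 1) := by
    rw [show n + 2 = n - 1 + 3 by omega, pow_add]; ring
  have hzpow : (2 : ℝ) ^ (-(n : ℤ) - 1) = (4 * 2 ^ (n - 1))⁻¹ := by
    rw [show -(n : ℤ) - 1 = -((n - 1 + 2 : ℕ) : ℤ) by omega, zpow_neg, zpow_natCast, pow_add]
    ring
  rw [hpow, hzpow]
  have hx : (3 : ℝ) ≤ n := by exact_mod_cast hn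
  have hxq : (n : ℝ) + 1 ≤ 2 ^ (n - 1) := by exact_mod_cast Nat.add_one_le_two_pow_sub_one hn
  set x : ℝ := (n : ℝ)
  set q : ℝ := 2 ^ (n - 1)
  have hq : 0 < q := by positivity
  have he : (4 * q)⁻¹ * (x + 1) ≤ x := by
    rw [inv_mul_le_iff₀ (by positivity)]; nlinarith
  refine ⟨mul_le_mul ?_ ?_ ?_ ?_, one_le_one_add_one_div_mul_one_sub_one_div (by positivity) hxq⟩
  · exact one_add_one_div_le_add_two_div_add (by positivity) (by positivity) he
  · exact one_sub_one_div_le_div (by positivity) hq (by positivity)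
  · rw [sub_nonneg, div_le_one hq]; linarith
  · positivity
end

section
/- For each integer n ≥ 0, set k_n = 1/(2^{n+2} − 2) and l_n = (2^{n+2} − n − 3)/(2^{n+2} − 2), and set (k_{−1}, l_{−1}) = (1, 0). Let α ∈ (0,1) with l_{n−1}/(k_{n−1}+1) ≤ α < l_n/(k_n+1) for some n ≥ 0. Then the real number B_2 = (l_n/(k_n+1) − α) / (l_n/(k_n+1) − α + 1/(k_n+1)) satisfies B_2 ≤ (n + 2^{−n−1})/(n + 2^{n+2} + 3·2^{−n−1} − 4). -/
/-!
`B₂ = x / (x + c)` with `x = l_n/(k_n+1) - α` and `c = 1/(k_n+1)` is increasing in `x`, so it is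
largest at the left end `α = l_{n-1}/(k_{n-1}+1)` of the interval. Writing `a = 2^{n+1}`, one has
`l_n/(k_n+1) = (2a-n-3)/(2a-1)`, `1/(k_n+1) = (2a-2)/(2a-1)` and, for every `n ≥ 0` including the
convention at `n = 0`, `l_{n-1}/(k_{n-1}+1) = (a-n-2)/(a-1)`; at that endpoint `B₂` equals
`(na+1)/(na+2(a-1)²+1)`, which is the claimed bound multiplied through by `a`.
-/

lemma div_add_le_div_add {K : Type*} [Field K] [LinearOrder K] [IsStrictOrderedRing K] {x y c : K} (hc : 0 < c) (hx : 0 ≤ x) (hxy : x ≤ y) :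
    x / (x + c) ≤ y / (y + c) := by
  rw [div_le_div_iff₀ (by linarith) (by linarith)]
  nlinarith

lemma one_div_sub_two_add_one {K : Type*} [Field K] {b : K} (hb : b - 2 ≠ 0) :
    1 / (b - 2) + 1 = (b - 1) / (b - 2) := by
  field_simp
  ring

section ClosedForms

variable {k l : ℕ → ℝ} (hk : ∀ m : ℕ, k m = 1 / (2 ^ (m + 2) - 2))

lemma two_pow_add_two_sub_two_pos (m : ℕ) : (0 : ℝ) < 2 ^ (m + 2) - 2 := by
  have : (2 : ℝ) ^ 2 ≤ 2 ^ (m + 2) := pow_le_pow_right₀ (by norm_num) (by omega)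
  linarith

include hk in
lemma one_div_k_add_one (m : ℕ) :
    1 / (k m + 1) = (2 ^ (m + 2) - 2) / (2 ^ (m + 2) - 1) := by
  rw [hk, one_div_sub_two_add_one (two_pow_add_two_sub_two_pos m).ne', one_div_div]

include hk in
lemma l_div_k_add_one (hl : ∀ m : ℕ, l m = (2 ^ (m + 2) - (m : ℝ) - 3) / (2 ^ (m + 2) - 2))
    (m : ℕ) : l m / (k m + 1) = (2 ^ (m + 2) - m - 3) / (2 ^ (m + 2) - 1) := by
  have hpos := two_pow_add_two_sub_two_pos m
  rw [hl, hk, one_div_sub_two_add_one hpos.ne', div_div_div_cancel_right₀ hpos.ne']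

include hk in
lemma lower_endpoint_eq (hl : ∀ m : ℕ, l m = (2 ^ (m + 2) - (m : ℝ) - 3) / (2 ^ (m + 2) - 2))
    (n : ℕ) : (if n = 0 then (0 : ℝ) else l (n - 1) / (k (n - 1) + 1))
      = (2 ^ (n + 1) - n - 2) / (2 ^ (n + 1) - 1) := by
  rcases n with _ | m
  · norm_num
  · rw [if_neg m.succ_ne_zero, Nat.add_sub_cancel, l_div_k_add_one hk hl]
    push_cast
    ring_nf

end ClosedForms

lemma B2_at_lower_endpoint (t a : ℝ) (ha : 1 < a) :
    ((2 * a - t - 3) / (2 * a - 1) - (a - t - 2) / (a - 1)) /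
        ((2 * a - t - 3) / (2 * a - 1) - (a - t - 2) / (a - 1) + (2 * a - 2) / (2 * a - 1))
      = (t + a⁻¹) / (t + 2 * a + 3 * a⁻¹ - 4) := by
  have h1 : a - 1 ≠ 0 := by linarith
  have h2 : 2 * a - 1 ≠ 0 := by linarith
  have h3 : a ≠ 0 := by linarith
  field_simp
  ring

theorem B2_upper_bound_general (k l : ℕ → ℝ)
    (hk : ∀ m : ℕ, k m = 1 / (2 ^ (m + 2) - 2))
    (hl : ∀ m : ℕ, l m = (2 ^ (m + 2) - (m : ℝ) - 3) / (2 ^ (m + 2) - 2))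
    (n : ℕ) (α : ℝ)
    (hlow : (if n = 0 then (0 : ℝ) else l (n - 1) / (k (n - 1) + 1)) ≤ α)
    (hup : α < l n / (k n + 1)) :
    (l n / (k n + 1) - α) / (l n / (k n + 1) - α + 1 / (k n + 1))
      ≤ ((n : ℝ) + (2 : ℝ) ^ (-(n : ℤ) - 1)) /
          ((n : ℝ) + 2 ^ (n + 2) + 3 * (2 : ℝ) ^ (-(n : ℤ) - 1) - 4) := by
  rw [lower_endpoint_eq hk hl] at hlow
  have hc : 0 < 1 / (k n + 1) := by
    have := two_pow_add_two_sub_two_pos n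
    rw [one_div_k_add_one hk]
    exact div_pos this (by linarith)
  calc _ ≤ (l n / (k n + 1) - (2 ^ (n + 1) - n - 2) / (2 ^ (n + 1) - 1)) /
        (l n / (k n + 1) - (2 ^ (n + 1) - n - 2) / (2 ^ (n + 1) - 1) + 1 / (k n + 1)) :=
      div_add_le_div_add hc (by linarith) (by linarith)
    _ = _ := by
      have htwo : (2 : ℝ) ^ (n + 2) = 2 * 2 ^ (n + 1) := by ring
      have hinv : (2 : ℝ) ^ (-(n : ℤ) - 1) = (2 ^ (n + 1))⁻¹ := by
        rw [← zpow_natCast, ← zpow_neg]; push_cast; ring_nf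
      rw [l_div_k_add_one hk hl, one_div_k_add_one hk, htwo, hinv]
      exact B2_at_lower_endpoint n _ (one_lt_pow₀ one_lt_two n.succ_ne_zero)

/-- With `k_n = 1/(2^{n+2}-2)`, `l_n = (2^{n+2}-n-3)/(2^{n+2}-2)` and the
    convention `l_{-1}/(k_{-1}+1) = 0`, if `α ∈ (0,1)` lies in the interval
    `[l_{n-1}/(k_{n-1}+1), l_n/(k_n+1))`, then
    `B₂ = (l_n/(k_n+1) - α)/(l_n/(k_n+1) - α + 1/(k_n+1))` satisfies
    `B₂ ≤ (n+2^{-n-1})/(n+2^{n+2}+3·2^{-n-1}-4)`. -/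
theorem B2_upper_bound (k l : ℕ → ℝ)
    (hk : ∀ m : ℕ, k m = 1 / (2 ^ (m + 2) - 2))
    (hl : ∀ m : ℕ, l m = (2 ^ (m + 2) - (m : ℝ) - 3) / (2 ^ (m + 2) - 2))
    (n : ℕ) (α : ℝ) (hα0 : 0 < α) (hα1 : α < 1)
    (hlow : (if n = 0 then (0 : ℝ) else l (n - 1) / (k (n - 1) + 1)) ≤ α)
    (hup : α < l n / (k n + 1)) :
    (l n / (k n + 1) - α) / (l n / (k n + 1) - α + 1 / (k n + 1))
      ≤ ((n : ℝ) + (2 : ℝ) ^ (-(n : ℤ) - 1)) /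
          ((n : ℝ) + 2 ^ (n + 2) + 3 * (2 : ℝ) ^ (-(n : ℤ) - 1) - 4) :=
  B2_upper_bound_general k l hk hl n α hlow hup
end

section
/- Let f be an arithmetic function with f(n) ≪ n^α (log(n+2))^θ for some fixed α ∈ [0,1) and θ ≥ 0. Then S_f(x) = C_f·x + O(x^{(1+α)/2} (log x)^θ) as x → ∞. In particular, if |f(n)| ≪ n^ε for every ε > 0, then S_f(x) = C_f·x + O(x^{1/2+ε}) for every ε > 0. -/
open Finset

private lemma tele_pos {q : ℝ} (hq0 : 0 < q) (hq1 : q ≤ 1) {n : ℕ} (hn : 1 ≤ n) :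
    q * (n : ℝ) ^ (q - 1) ≤ (n : ℝ) ^ q - ((n : ℝ) - 1) ^ q := by
  have hn1 : (1:ℝ) ≤ n := by exact_mod_cast hn
  have hn0 : (0:ℝ) < n := by linarith
  have hs : (-1 : ℝ) ≤ -(1 / (n:ℝ)) := by
    have : 1 / (n:ℝ) ≤ 1 := by
      rw [div_le_one hn0]; exact hn1
    linarith
  have hB := rpow_one_add_le_one_add_mul_self hs hq0.le hq1
  have h1 : (1:ℝ) + -(1/(n:ℝ)) = 1 - 1/n := by ring
  rw [h1] at hB
  have hpos : (0:ℝ) ≤ 1 - 1/(n:ℝ) := by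
    have : 1 / (n:ℝ) ≤ 1 := by rw [div_le_one hn0]; exact hn1
    linarith
  have h2 : ((n:ℝ) - 1) ^ q = (n:ℝ)^q * (1 - 1/(n:ℝ))^q := by
    rw [← Real.mul_rpow hn0.le hpos]
    congr 1
    field_simp
  have h3 : (n:ℝ)^(q-1) = (n:ℝ)^q / n := by
    rw [Real.rpow_sub hn0, Real.rpow_one]
  have h4 : (0:ℝ) < (n:ℝ)^q := Real.rpow_pos_of_pos hn0 q
  rw [h2, h3]
  have h6 : (n:ℝ)^q * (1 - 1/(n:ℝ))^q ≤ (n:ℝ)^q * (1 - q/n) := by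
    apply mul_le_mul_of_nonneg_left _ h4.le
    calc (1 - 1/(n:ℝ))^q ≤ 1 + q * -(1/n) := hB
    _ = 1 - q/n := by ring
  have hexp : (n:ℝ)^q * (1 - q/n) = (n:ℝ)^q - q * ((n:ℝ)^q / n) := by
    field_simp
  linarith

private lemma tele_neg {q : ℝ} (hq0 : -1 ≤ q) (hq1 : q < 0) {n : ℕ} (hn : 2 ≤ n) :
    (-q) * (n : ℝ) ^ (q - 1) ≤ ((n : ℝ) - 1) ^ q - (n : ℝ) ^ q := by
  have hn2 : (2:ℝ) ≤ n := by exact_mod_cast hn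
  have hn0 : (0:ℝ) < n := by linarith
  set p : ℝ := -q with hp
  have hp0 : 0 < p := by simp only [hp]; linarith
  have hp1 : p ≤ 1 := by simp only [hp]; linarith
  have hinv : 1 / (n:ℝ) ≤ 1/2 := by
    apply div_le_div_of_nonneg_left (by norm_num) (by norm_num) hn2
  have hinv0 : 0 < 1 / (n:ℝ) := by positivity
  have hs : (-1 : ℝ) ≤ -(1 / (n:ℝ)) := by linarith
  have hB := rpow_one_add_le_one_add_mul_self hs hp0.le hp1
  have h1 : (1:ℝ) + -(1/(n:ℝ)) = 1 - 1/n := by ring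
  rw [h1] at hB
  have hb2 : (1 - 1/(n:ℝ))^p ≤ 1 - p/n := by
    calc (1 - 1/(n:ℝ))^p ≤ 1 + p * -(1/n) := hB
    _ = 1 - p/n := by ring
  have hbase : (0:ℝ) < 1 - 1/(n:ℝ) := by linarith
  have hbp : (0:ℝ) < (1 - 1/(n:ℝ))^p := Real.rpow_pos_of_pos hbase p
  have hpn : p/(n:ℝ) ≤ 1/2 := by
    calc p/(n:ℝ) ≤ 1/(n:ℝ) := by gcongr
    _ ≤ 1/2 := hinv
  have hq2 : (0:ℝ) < 1 - p/(n:ℝ) := by linarith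
  have h3 : (1 - 1/(n:ℝ))^q = ((1 - 1/(n:ℝ))^p)⁻¹ := by
    rw [show q = -p by simp [hp], Real.rpow_neg hbase.le]
  have h5 : (1:ℝ) + p/n ≤ (1 - 1/(n:ℝ))^q := by
    rw [h3]
    have h6 : (1 + p/(n:ℝ)) * (1 - p/(n:ℝ)) ≤ 1 := by nlinarith [sq_nonneg (p/(n:ℝ))]
    have h7 : (1 + p/(n:ℝ)) ≤ (1 - p/(n:ℝ))⁻¹ := by
      rw [inv_eq_one_div, le_div_iff₀ hq2]; linarith
    have h8 : (1 - p/(n:ℝ))⁻¹ ≤ ((1 - 1/(n:ℝ))^p)⁻¹ := by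
      apply inv_anti₀ hbp hb2
    linarith
  have h2 : ((n:ℝ) - 1) ^ q = (n:ℝ)^q * (1 - 1/(n:ℝ))^q := by
    rw [← Real.mul_rpow hn0.le hbase.le]
    congr 1
    field_simp
  have h3' : (n:ℝ)^(q-1) = (n:ℝ)^q / n := by
    rw [Real.rpow_sub hn0, Real.rpow_one]
  have h4 : (0:ℝ) < (n:ℝ)^q := Real.rpow_pos_of_pos hn0 q
  rw [h2, h3']
  have h9 : (n:ℝ)^q * (1 + p/n) ≤ (n:ℝ)^q * (1 - 1/(n:ℝ))^q :=
    mul_le_mul_of_nonneg_left h5 h4.le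
  have hexp : (n:ℝ)^q * (1 + p/n) = (n:ℝ)^q + p * ((n:ℝ)^q / n) := by
    field_simp
  linarith

private lemma sum_rpow_le {q : ℝ} (hq0 : 0 < q) (hq1 : q ≤ 1) (A : ℕ) :
    ∑ n ∈ Finset.Icc 1 A, (n:ℝ)^(q-1) ≤ (A:ℝ)^q / q := by
  have key : q * ∑ n ∈ Finset.Icc 1 A, (n:ℝ)^(q-1) ≤ (A:ℝ)^q := by
    rw [Finset.mul_sum]
    calc ∑ n ∈ Finset.Icc 1 A, q * (n:ℝ)^(q-1)
        ≤ ∑ n ∈ Finset.Icc 1 A, ((n:ℝ)^q - ((n:ℝ)-1)^q) := by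
          apply Finset.sum_le_sum
          intro n hn
          exact tele_pos hq0 hq1 (Finset.mem_Icc.mp hn).1
      _ = ∑ k ∈ Finset.range A, (((1+k:ℕ):ℝ)^q - (((1+k:ℕ):ℝ)-1)^q) := by
          rw [← Finset.Ico_add_one_right_eq_Icc, Finset.sum_Ico_eq_sum_range]
          simp
      _ = ∑ k ∈ Finset.range A, (((k+1:ℕ):ℝ)^q - ((k:ℕ):ℝ)^q) := by
          apply Finset.sum_congr rfl
          intro k _
          congr 2 <;> push_cast <;> ring
      _ = ((A:ℕ):ℝ)^q - ((0:ℕ):ℝ)^q := Finset.sum_range_sub (fun k => ((k:ℕ):ℝ)^q) A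
      _ ≤ (A:ℝ)^q := by
          simp only [Nat.cast_zero]
          rw [Real.zero_rpow hq0.ne']
          simp
  rw [le_div_iff₀ hq0]
  linarith [key]

private lemma tail_summable {p : ℝ} (hp1 : p < -1) (k : ℕ) :
    Summable (fun n : ℕ => ((n + k : ℕ):ℝ)^p) :=
  (summable_nat_add_iff k).mpr (Real.summable_nat_rpow.mpr hp1)

private lemma tail_rpow_le {p : ℝ} (hp2 : -2 ≤ p) (hp1 : p < -1) {M : ℕ} (hM : 1 ≤ M) :
    (∑' n : ℕ, ((n + (M+1) : ℕ) : ℝ) ^ p) ≤ (M:ℝ)^(p+1) / (-(p+1)) := by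
  have hq0 : (-1:ℝ) ≤ p + 1 := by linarith
  have hq1 : p + 1 < 0 := by linarith
  have hqpos : 0 < -(p+1) := by linarith
  apply Real.tsum_le_of_sum_range_le
  · intro n; positivity
  · intro n
    set φ : ℕ → ℝ := fun j => ((M+j:ℕ):ℝ)^(p+1) with hφ
    have key : ∀ i : ℕ, ((i + (M+1) : ℕ):ℝ)^p ≤ (φ i - φ (i+1)) / (-(p+1)) := by
      intro i
      have h := tele_neg hq0 hq1 (n := M+i+1) (by omega)
      have e1 : ((M+i+1:ℕ):ℝ) - 1 = ((M+i:ℕ):ℝ) := by push_cast; ring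
      have e3 : p + 1 - 1 = p := by ring
      rw [e1, e3] at h
      have e2 : ((i + (M+1):ℕ):ℝ) = ((M+i+1:ℕ):ℝ) := by push_cast; ring
      rw [e2, le_div_iff₀ hqpos]
      have e4 : φ i = ((M+i:ℕ):ℝ)^(p+1) := rfl
      have e5 : φ (i+1) = ((M+i+1:ℕ):ℝ)^(p+1) := rfl
      rw [e4, e5]
      calc ((M+i+1:ℕ):ℝ)^p * -(p+1) = (-(p+1)) * ((M+i+1:ℕ):ℝ)^p := by ring
      _ ≤ ((M+i:ℕ):ℝ)^(p+1) - ((M+i+1:ℕ):ℝ)^(p+1) := h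
    calc ∑ i ∈ Finset.range n, ((i + (M+1) : ℕ):ℝ)^p
        ≤ ∑ i ∈ Finset.range n, (φ i - φ (i+1)) / (-(p+1)) :=
          Finset.sum_le_sum (fun i _ => key i)
      _ = (φ 0 - φ n) / (-(p+1)) := by
          rw [← Finset.sum_div, Finset.sum_range_sub' φ n]
      _ ≤ (M:ℝ)^(p+1) / (-(p+1)) := by
          have hφ0 : φ 0 = (M:ℝ)^(p+1) := by simp [hφ]
          have hφn : 0 ≤ φ n := Real.rpow_nonneg (Nat.cast_nonneg _) _
          rw [div_le_div_iff₀ hqpos hqpos]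
          nlinarith [hqpos, hφn, hφ0]

set_option maxHeartbeats 2000000 in
private lemma hyp_aux (f : ℕ → ℝ) (K α θ : ℝ)
    (hα0 : 0 ≤ α) (hα1 : α < 1) (hθ : 0 ≤ θ)
    (hf : ∀ n : ℕ, 1 ≤ n → |f n| ≤ K * (n : ℝ) ^ α * (Real.log ((n : ℝ) + 2)) ^ θ) :
    ∃ C X : ℝ, ∀ x : ℝ, X ≤ x →
      |(∑ n ∈ Finset.Icc 1 ⌊x⌋₊, f (Nat.floor (x / (n : ℝ)))) -
        (∑' n : ℕ, f (n + 1) / ((n + 1) * (n + 2))) * x|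
        ≤ C * x ^ ((1 + α) / 2) * (Real.log x) ^ θ := by
  have hK0 : 0 ≤ K := by
    have h1 := hf 1 le_rfl
    simp only [Nat.cast_one, Real.one_rpow, mul_one] at h1
    have h2 : (0:ℝ) < Real.log (1 + 2) ^ θ :=
      Real.rpow_pos_of_pos (Real.log_pos (by norm_num)) θ
    by_contra hK
    push_neg at hK
    nlinarith [abs_nonneg (f 1)]
  -- the sub-one-exponent trick for logs
  have hBex : ∃ B : ℝ, 0 ≤ B ∧ ∀ m : ℕ, 1 ≤ m →
      (Real.log ((m:ℝ)+2))^θ ≤ B * (m:ℝ)^((1-α)/2) := by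
    rcases eq_or_lt_of_le hθ with hθ0 | hθp
    · refine ⟨1, zero_le_one, fun m hm => ?_⟩
      rw [← hθ0, Real.rpow_zero, one_mul]
      exact Real.one_le_rpow (by exact_mod_cast hm) (by linarith)
    · set η := ((1-α)/2) / θ with hη
      have hηp : 0 < η := div_pos (by linarith) hθp
      refine ⟨((3:ℝ)^η / η)^θ, Real.rpow_nonneg (by positivity) θ, fun m hm => ?_⟩
      have hm1 : (1:ℝ) ≤ m := by exact_mod_cast hm
      have h4 : Real.log ((m:ℝ)+2) ≤ (3^η/η) * (m:ℝ)^η := by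
        calc Real.log ((m:ℝ)+2) ≤ ((m:ℝ)+2)^η / η := Real.log_le_rpow_div (by linarith) hηp
        _ ≤ ((3*(m:ℝ))^η) / η := by
            apply div_le_div_of_nonneg_right _ hηp.le
            exact Real.rpow_le_rpow (by linarith) (by linarith) hηp.le
        _ = (3^η * (m:ℝ)^η) / η := by rw [Real.mul_rpow (by norm_num) (by linarith)]
        _ = (3^η/η) * (m:ℝ)^η := by ring
      calc (Real.log ((m:ℝ)+2))^θ ≤ ((3^η/η) * (m:ℝ)^η)^θ := by
            apply Real.rpow_le_rpow (Real.log_nonneg (by linarith)) h4 hθ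
      _ = ((3:ℝ)^η/η)^θ * ((m:ℝ)^η)^θ := by
            apply Real.mul_rpow (by positivity) (Real.rpow_nonneg (by linarith) η)
      _ = ((3:ℝ)^η/η)^θ * (m:ℝ)^((1-α)/2) := by
            rw [← Real.rpow_mul (by linarith : (0:ℝ) ≤ m)]
            rw [show η * θ = (1-α)/2 from div_mul_cancel₀ _ hθp.ne']
  obtain ⟨B, hB0, hB⟩ := hBex
  set g : ℕ → ℝ := fun m => f m / ((m:ℝ) * ((m:ℝ)+1)) with hg
  have hg0 : g 0 = 0 := by simp [hg]
  have hpδ1 : α - 2 + (1-α)/2 < -1 := by linarith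
  have hpδ0 : α - 2 + (1-α)/2 ≠ 0 := by linarith
  have habs : ∀ m : ℕ, |g m| ≤ (K*B) * (m:ℝ)^(α - 2 + (1-α)/2) := by
    intro m
    rcases Nat.eq_zero_or_pos m with rfl | hm
    · simp [hg, Real.zero_rpow hpδ0]
    · have hm1 : (1:ℝ) ≤ m := by exact_mod_cast hm
      have hm0 : (0:ℝ) < m := by linarith
      have hd : (0:ℝ) < (m:ℝ)*((m:ℝ)+1) := by positivity
      have h1 : |g m| = |f m| / ((m:ℝ)*((m:ℝ)+1)) := by
        simp only [hg]; rw [abs_div, abs_of_pos hd]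
      have h2 : |f m| ≤ K * (m:ℝ)^α * (B * (m:ℝ)^((1-α)/2)) := by
        calc |f m| ≤ K * (m:ℝ)^α * (Real.log ((m:ℝ)+2))^θ := hf m hm
        _ ≤ _ := mul_le_mul_of_nonneg_left (hB m hm) (by positivity)
      have h3 : |f m| / ((m:ℝ)*((m:ℝ)+1)) ≤ (K * (m:ℝ)^α * (B * (m:ℝ)^((1-α)/2))) / ((m:ℝ)*(m:ℝ)) := by
        apply div_le_div₀ (by positivity) h2 (by positivity)
        nlinarith
      have h4 : (K * (m:ℝ)^α * (B * (m:ℝ)^((1-α)/2))) / ((m:ℝ)*(m:ℝ)) = (K*B) * (m:ℝ)^(α-2+(1-α)/2) := by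
        rw [show α-2+(1-α)/2 = α + (1-α)/2 - 2 by ring, Real.rpow_sub hm0, Real.rpow_add hm0]
        rw [show ((2:ℝ)) = ((2:ℕ):ℝ) from by norm_num, Real.rpow_natCast]
        field_simp
      rw [h1, ← h4]
      exact h3
  have hsum_abs : Summable (fun m => |g m|) :=
    Summable.of_nonneg_of_le (fun _ => abs_nonneg _) habs
      ((Real.summable_nat_rpow.mpr hpδ1).mul_left (K*B))
  have hsum : Summable g := hsum_abs.of_abs
  have hCg : (∑' n : ℕ, f (n + 1) / (((n:ℝ) + 1) * ((n:ℝ) + 2))) = ∑' m, g m := by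
    have h1 : ∀ n : ℕ, f (n+1) / (((n:ℝ)+1)*((n:ℝ)+2)) = g (n+1) := by
      intro n; simp only [hg]; push_cast; ring_nf
    calc (∑' n : ℕ, f (n + 1) / (((n:ℝ) + 1) * ((n:ℝ) + 2))) = ∑' n, g (n+1) := tsum_congr h1
    _ = ∑' m, g m := by rw [Summable.tsum_eq_zero_add hsum, hg0, zero_add]
  refine ⟨K * (2:ℝ)^θ / (1-α) + K * (2:ℝ)^θ + K * (5:ℝ)^θ * 2 / (1-α) + 32*K*B/(1-α),
    16, fun x hx => ?_⟩
  have hx0 : (0:ℝ) < x := by linarith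
  have hx1 : (1:ℝ) ≤ x := by linarith
  have hlog1 : 1 ≤ Real.log x := by
    rw [Real.le_log_iff_exp_le hx0]
    have := Real.exp_one_lt_d9
    linarith
  have hlog0 : 0 ≤ Real.log x := by linarith
  have hlogθ : 1 ≤ (Real.log x)^θ := Real.one_le_rpow hlog1 hθ
  have hlogx2 : Real.log (x+2) ≤ 2 * Real.log x := by
    have h1 : x + 2 ≤ x * x := by nlinarith
    calc Real.log (x+2) ≤ Real.log (x*x) := Real.log_le_log (by linarith) h1
    _ = Real.log x + Real.log x := Real.log_mul hx0.ne' hx0.ne'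
    _ = 2 * Real.log x := by ring
  have hlogx2θ : (Real.log (x+2))^θ ≤ (2:ℝ)^θ * (Real.log x)^θ := by
    calc (Real.log (x+2))^θ ≤ (2*Real.log x)^θ :=
          Real.rpow_le_rpow (Real.log_nonneg (by linarith)) hlogx2 hθ
    _ = (2:ℝ)^θ * (Real.log x)^θ := Real.mul_rpow (by norm_num) hlog0
  set s := Real.sqrt x with hsdef
  have hss : s * s = x := Real.mul_self_sqrt hx0.le
  have hs4 : (4:ℝ) ≤ s := by
    have h16 : (4:ℝ) = Real.sqrt 16 := by
      rw [show (16:ℝ) = 4^2 by norm_num, Real.sqrt_sq (by norm_num)]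
    rw [h16]
    exact Real.sqrt_le_sqrt hx
  have hs0 : (0:ℝ) < s := by linarith
  have hsx : s ≤ x := by nlinarith
  set M := ⌊s⌋₊ with hMdef
  have hM4 : 4 ≤ M := Nat.le_floor (by exact_mod_cast hs4)
  have hM1 : 1 ≤ M := by omega
  have hMr : (M:ℝ) ≤ s := Nat.floor_le hs0.le
  have hMs : s < (M:ℝ) + 1 := Nat.lt_floor_add_one s
  have hM0 : (0:ℝ) < M := by
    have : (1:ℝ) ≤ M := by exact_mod_cast hM1
    linarith
  have hMhalf : s/2 ≤ (M:ℝ) := by linarith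
  have hMx : (M:ℝ) ≤ x := hMr.trans hsx
  set N := ⌊x⌋₊ with hNdef
  set A := ⌊x/((M:ℝ)+1)⌋₊ with hAdef
  have hA : (A:ℝ) ≤ s := by
    have h1 : (A:ℝ) ≤ x/((M:ℝ)+1) := Nat.floor_le (by positivity)
    have h2 : x/((M:ℝ)+1) ≤ x/s := div_le_div_of_nonneg_left hx0.le hs0 (by linarith)
    have h3 : x/s = s := by
      rw [← hss]
      field_simp
    linarith
  have hAN : A ≤ N := Nat.floor_le_floor (div_le_self hx0.le (by linarith))
  have key : ∀ (m n : ℕ), 1 ≤ n → (m ≤ ⌊x / (n:ℝ)⌋₊ ↔ (m:ℝ) * n ≤ x) := by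
    intro m n hn
    have hn0 : (0:ℝ) < n := by exact_mod_cast hn
    rw [Nat.le_floor_iff (by positivity), le_div_iff₀ hn0]
  have hfloor1 : ∀ n : ℕ, 1 ≤ n → (n:ℝ) ≤ x → 1 ≤ ⌊x/(n:ℝ)⌋₊ := by
    intro n hn hnx
    rw [key 1 n hn]
    simpa using hnx
  have hsplit : ∑ n ∈ Icc 1 N, f ⌊x/(n:ℝ)⌋₊
      = (∑ n ∈ Ioc 0 A, f ⌊x/(n:ℝ)⌋₊) + ∑ n ∈ Ioc A N, f ⌊x/(n:ℝ)⌋₊ := by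
    rw [(by rw [← Finset.Icc_add_one_left_eq_Ioc]; rfl : Icc 1 N = Ioc 0 N)]
    exact (Finset.sum_Ioc_consecutive _ (Nat.zero_le A) hAN).symm
  have hAfloor : x/((M:ℝ)+1) < (A:ℝ) + 1 := Nat.lt_floor_add_one _
  have hmaps : ∀ n ∈ Ioc A N, ⌊x/(n:ℝ)⌋₊ ∈ Icc 1 M := by
    intro n hn
    rw [mem_Ioc] at hn
    obtain ⟨hnA, hnN⟩ := hn
    have hn1 : 1 ≤ n := by omega
    have hn1r : (1:ℝ) ≤ n := by exact_mod_cast hn1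
    have hnx : (n:ℝ) ≤ x := le_trans (by exact_mod_cast hnN : (n:ℝ) ≤ N) (Nat.floor_le hx0.le)
    rw [mem_Icc]
    constructor
    · exact hfloor1 n hn1 hnx
    · have hAn : (A:ℝ) + 1 ≤ n := by
        have : A + 1 ≤ n := hnA
        exact_mod_cast this
      have hxn : x < (n:ℝ) * ((M:ℝ)+1) := by
        have h1 : x/((M:ℝ)+1) < (n:ℝ) := by linarith
        calc x = (x/((M:ℝ)+1)) * ((M:ℝ)+1) := by field_simp
        _ < (n:ℝ) * ((M:ℝ)+1) := by
            apply mul_lt_mul_of_pos_right h1 (by linarith)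
      have : ⌊x/(n:ℝ)⌋₊ < M + 1 := by
        rw [Nat.floor_lt (by positivity)]
        rw [div_lt_iff₀ (by linarith : (0:ℝ) < n)]
        push_cast
        linarith
      omega
  have hfib : ∀ m ∈ Icc 1 M,
      Finset.filter (fun n : ℕ => ⌊x/(n:ℝ)⌋₊ = m) (Ioc A N) = Ioc ⌊x/((m:ℝ)+1)⌋₊ ⌊x/(m:ℝ)⌋₊ := by
    intro m hm
    rw [mem_Icc] at hm
    obtain ⟨hm1, hmM⟩ := hm
    have hm1r : (1:ℝ) ≤ m := by exact_mod_cast hm1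
    have hcast : x/((m:ℝ)+1) = x/(((m+1:ℕ)):ℝ) := by push_cast; ring_nf
    ext n
    simp only [mem_filter, mem_Ioc]
    constructor
    · rintro ⟨⟨hnA, hnN⟩, heq⟩
      have hn1 : 1 ≤ n := by omega
      constructor
      · -- ⌊x/(m+1)⌋ < n
        by_contra hcon
        push_neg at hcon
        have h1 : (n:ℝ) * ((m+1:ℕ):ℝ) ≤ x := by
          rw [← key n (m+1) (by omega)]
          rw [hcast] at hcon
          exact hcon
        have h2 : m + 1 ≤ ⌊x/(n:ℝ)⌋₊ := by
          rw [key (m+1) n hn1]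
          push_cast at h1 ⊢
          linarith
        omega
      · -- n ≤ ⌊x/m⌋
        rw [key n m hm1]
        have h2 : (m:ℝ) * n ≤ x := by
          rw [← key m n hn1, heq]
        linarith [h2]
    · rintro ⟨hlow, hhigh⟩
      have hn1 : 1 ≤ n := by omega
      have h1 : (m:ℝ) * n ≤ x := by
        rw [mul_comm, ← key n m hm1]
        exact hhigh
      have h2 : m ≤ ⌊x/(n:ℝ)⌋₊ := by
        rw [key m n hn1]
        exact h1
      have h3 : ⌊x/(n:ℝ)⌋₊ ≤ m := by
        by_contra hcon
        push_neg at hcon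
        have h4 : m + 1 ≤ ⌊x/(n:ℝ)⌋₊ := hcon
        rw [key (m+1) n hn1] at h4
        have h5 : n ≤ ⌊x/(((m+1:ℕ)):ℝ)⌋₊ := by
          rw [key n (m+1) (by omega)]
          push_cast at h4 ⊢
          linarith
        rw [← hcast] at h5
        omega
      refine ⟨⟨?_, ?_⟩, by omega⟩
      · -- A < n
        have h6 : A ≤ ⌊x/((m:ℝ)+1)⌋₊ := by
          apply Nat.floor_le_floor
          apply div_le_div_of_nonneg_left hx0.le (by linarith)
          have : (m:ℝ) ≤ M := by exact_mod_cast hmM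
          linarith
        omega
      · -- n ≤ N
        have h7 : ⌊x/(m:ℝ)⌋₊ ≤ N := by
          rw [hNdef]
          apply Nat.floor_le_floor
          exact div_le_self hx0.le hm1r
        omega
  have hregroup : ∑ n ∈ Ioc A N, f ⌊x/(n:ℝ)⌋₊
      = ∑ m ∈ Icc 1 M, ((⌊x/(m:ℝ)⌋₊ : ℝ) - (⌊x/((m:ℝ)+1)⌋₊ : ℝ)) * f m := by
    rw [← Finset.sum_fiberwise_of_maps_to hmaps (fun n => f ⌊x/(n:ℝ)⌋₊)]
    apply Finset.sum_congr rfl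
    intro m hm
    have hfloordiff : ⌊x/((m:ℝ)+1)⌋₊ ≤ ⌊x/(m:ℝ)⌋₊ := by
      apply Nat.floor_le_floor
      apply div_le_div_of_nonneg_left hx0.le ?_ (by linarith)
      have := (mem_Icc.mp hm).1
      have : (1:ℝ) ≤ m := by exact_mod_cast this
      linarith
    calc ∑ n ∈ Finset.filter (fun n : ℕ => ⌊x/(n:ℝ)⌋₊ = m) (Ioc A N), f ⌊x/(n:ℝ)⌋₊
        = ∑ n ∈ Finset.filter (fun n : ℕ => ⌊x/(n:ℝ)⌋₊ = m) (Ioc A N), f m := by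
          apply Finset.sum_congr rfl
          intro n hn
          rw [(mem_filter.mp hn).2]
    _ = ((Finset.filter (fun n : ℕ => ⌊x/(n:ℝ)⌋₊ = m) (Ioc A N)).card : ℝ) * f m := by
          rw [Finset.sum_const, nsmul_eq_mul]
    _ = ((⌊x/(m:ℝ)⌋₊ : ℝ) - (⌊x/((m:ℝ)+1)⌋₊ : ℝ)) * f m := by
          rw [hfib m hm, Nat.card_Ioc, Nat.cast_sub hfloordiff]
  have htsum_split : ∑' n, g n = (∑ m ∈ Icc 1 M, g m) + ∑' n, g (n + (M+1)) := by
    rw [← Summable.sum_add_tsum_nat_add (M+1) hsum]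
    congr 1
    have hins : Finset.range (M+1) = insert 0 (Icc 1 M) := by
      ext k
      simp only [Finset.mem_range, Finset.mem_insert, Finset.mem_Icc]
      omega
    rw [hins, Finset.sum_insert (by simp), hg0, zero_add]
  have hD : (∑ n ∈ Icc 1 N, f ⌊x/(n:ℝ)⌋₊) - (∑' m, g m) * x
      = (∑ n ∈ Ioc 0 A, f ⌊x/(n:ℝ)⌋₊)
        + (∑ m ∈ Icc 1 M, f m * (((⌊x/(m:ℝ)⌋₊ : ℝ) - (⌊x/((m:ℝ)+1)⌋₊ : ℝ)) - x/((m:ℝ)*((m:ℝ)+1))))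
        - (∑' n, g (n + (M+1))) * x := by
    rw [hsplit, hregroup, htsum_split]
    have e1 : ∑ m ∈ Icc 1 M, f m * (((⌊x/(m:ℝ)⌋₊ : ℝ) - (⌊x/((m:ℝ)+1)⌋₊ : ℝ)) - x/((m:ℝ)*((m:ℝ)+1)))
        = (∑ m ∈ Icc 1 M, ((⌊x/(m:ℝ)⌋₊ : ℝ) - (⌊x/((m:ℝ)+1)⌋₊ : ℝ)) * f m)
          - ∑ m ∈ Icc 1 M, g m * x := by
      rw [← Finset.sum_sub_distrib]
      apply Finset.sum_congr rfl
      intro m hm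
      simp only [hg]
      ring
    rw [e1, ← Finset.sum_mul]
    ring
  -- convenient abbreviations
  set P := x^((1+α)/2) * (Real.log x)^θ with hP
  have hxP : (0:ℝ) < x^((1+α)/2) := Real.rpow_pos_of_pos hx0 _
  have hsexp : ∀ c : ℝ, s^c = x^(c/2) := by
    intro c
    rw [hsdef, Real.sqrt_eq_rpow, ← Real.rpow_mul hx0.le]
    congr 1
    ring
  -- Bound T1
  have hT1 : |∑ n ∈ Ioc 0 A, f ⌊x/(n:ℝ)⌋₊| ≤ (K * (2:ℝ)^θ / (1-α)) * P := by
    have hterm : ∀ n ∈ Ioc 0 A, |f ⌊x/(n:ℝ)⌋₊|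
        ≤ (K * ((2:ℝ)^θ * (Real.log x)^θ)) * (x^α * (n:ℝ)^((1-α)-1)) := by
      intro n hn
      rw [mem_Ioc] at hn
      have hn1 : 1 ≤ n := hn.1
      have hn1r : (1:ℝ) ≤ n := by exact_mod_cast hn1
      have hn0 : (0:ℝ) < n := by linarith
      have hnA : (n:ℝ) ≤ A := by exact_mod_cast hn.2
      have hnx : (n:ℝ) ≤ x := by linarith [hA, hsx]
      set m := ⌊x/(n:ℝ)⌋₊ with hmd
      have hm1 : 1 ≤ m := hfloor1 n hn1 hnx
      have hm1r : (1:ℝ) ≤ m := by exact_mod_cast hm1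
      have hmr : (m:ℝ) ≤ x/n := Nat.floor_le (by positivity)
      have hmx : (m:ℝ) ≤ x := le_trans hmr (div_le_self hx0.le hn1r)
      have h2 : (m:ℝ)^α ≤ (x/n)^α := Real.rpow_le_rpow (Nat.cast_nonneg m) hmr hα0
      have h3 : (Real.log ((m:ℝ)+2))^θ ≤ (2:ℝ)^θ * (Real.log x)^θ := by
        calc (Real.log ((m:ℝ)+2))^θ ≤ (Real.log (x+2))^θ := by
              apply Real.rpow_le_rpow (Real.log_nonneg (by linarith))
                (Real.log_le_log (by linarith) (by linarith)) hθ
        _ ≤ (2:ℝ)^θ * (Real.log x)^θ := hlogx2θ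
      have h4 : (x/(n:ℝ))^α = x^α * (n:ℝ)^((1-α)-1) := by
        rw [Real.div_rpow hx0.le hn0.le]
        rw [show (1-α)-1 = -α by ring, Real.rpow_neg hn0.le]
        rw [div_eq_mul_inv]
      calc |f m| ≤ K * (m:ℝ)^α * (Real.log ((m:ℝ)+2))^θ := hf m hm1
      _ ≤ K * (x/(n:ℝ))^α * ((2:ℝ)^θ * (Real.log x)^θ) := by
          apply mul_le_mul (mul_le_mul_of_nonneg_left h2 hK0) h3
            (Real.rpow_nonneg (Real.log_nonneg (by linarith)) θ) ?_
          have : (0:ℝ) ≤ (x/(n:ℝ))^α := Real.rpow_nonneg (by positivity) α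
          nlinarith
      _ = (K * ((2:ℝ)^θ * (Real.log x)^θ)) * (x^α * (n:ℝ)^((1-α)-1)) := by rw [h4]; ring
    have hnn : (0:ℝ) ≤ K * ((2:ℝ)^θ * (Real.log x)^θ) :=
      mul_nonneg hK0 (mul_nonneg (Real.rpow_nonneg (by norm_num) θ) (Real.rpow_nonneg hlog0 θ))
    calc |∑ n ∈ Ioc 0 A, f ⌊x/(n:ℝ)⌋₊| ≤ ∑ n ∈ Ioc 0 A, |f ⌊x/(n:ℝ)⌋₊| :=
          Finset.abs_sum_le_sum_abs _ _
    _ ≤ ∑ n ∈ Ioc 0 A, (K * ((2:ℝ)^θ * (Real.log x)^θ)) * (x^α * (n:ℝ)^((1-α)-1)) :=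
          Finset.sum_le_sum hterm
    _ = (K * ((2:ℝ)^θ * (Real.log x)^θ)) * (x^α * ∑ n ∈ Icc 1 A, (n:ℝ)^((1-α)-1)) := by
          rw [← (by rw [← Finset.Icc_add_one_left_eq_Ioc]; rfl : Icc 1 A = Ioc 0 A), ← Finset.mul_sum, ← Finset.mul_sum]
    _ ≤ (K * ((2:ℝ)^θ * (Real.log x)^θ)) * (x^α * ((A:ℝ)^(1-α)/(1-α))) := by
          apply mul_le_mul_of_nonneg_left _ hnn
          apply mul_le_mul_of_nonneg_left _ (Real.rpow_nonneg hx0.le α)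
          exact sum_rpow_le (by linarith) (by linarith) A
    _ ≤ (K * ((2:ℝ)^θ * (Real.log x)^θ)) * (x^α * (s^(1-α)/(1-α))) := by
          apply mul_le_mul_of_nonneg_left _ hnn
          apply mul_le_mul_of_nonneg_left _ (Real.rpow_nonneg hx0.le α)
          apply div_le_div_of_nonneg_right
            (Real.rpow_le_rpow (Nat.cast_nonneg A) hA (by linarith)) (by linarith)
    _ = (K * (2:ℝ)^θ / (1-α)) * P := by
          rw [hP, hsexp (1-α)]
          rw [show x^α * (x^((1-α)/2)/(1-α)) = (x^α * x^((1-α)/2))/(1-α) by ring]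
          rw [← Real.rpow_add hx0, show α + (1-α)/2 = (1+α)/2 by ring]
          ring
  -- Bound T2
  have hΔ1 : ∀ m : ℕ, 1 ≤ m →
      |((⌊x/(m:ℝ)⌋₊ : ℝ) - (⌊x/((m:ℝ)+1)⌋₊ : ℝ)) - x/((m:ℝ)*((m:ℝ)+1))| ≤ 1 := by
    intro m hm
    have hm1 : (1:ℝ) ≤ m := by exact_mod_cast hm
    have hm0 : (0:ℝ) < m := by linarith
    have e : x/((m:ℝ)*((m:ℝ)+1)) = x/m - x/((m:ℝ)+1) := by
      field_simp
      ring
    rw [e]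
    have f1 : (⌊x/(m:ℝ)⌋₊:ℝ) ≤ x/m := Nat.floor_le (by positivity)
    have f2 : x/(m:ℝ) < ⌊x/(m:ℝ)⌋₊ + 1 := Nat.lt_floor_add_one _
    have f3 : (⌊x/((m:ℝ)+1)⌋₊:ℝ) ≤ x/((m:ℝ)+1) := Nat.floor_le (by positivity)
    have f4 : x/((m:ℝ)+1) < ⌊x/((m:ℝ)+1)⌋₊ + 1 := Nat.lt_floor_add_one _
    rw [abs_le]
    constructor <;> linarith
  have hT2 : |∑ m ∈ Icc 1 M, f m * (((⌊x/(m:ℝ)⌋₊ : ℝ) - (⌊x/((m:ℝ)+1)⌋₊ : ℝ)) - x/((m:ℝ)*((m:ℝ)+1)))|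
      ≤ (K * (2:ℝ)^θ) * P := by
    have hnn2 : (0:ℝ) ≤ K * (M:ℝ)^α * ((2:ℝ)^θ * (Real.log x)^θ) := by
      apply mul_nonneg (mul_nonneg hK0 (Real.rpow_nonneg (Nat.cast_nonneg M) α))
      exact mul_nonneg (Real.rpow_nonneg (by norm_num) θ) (Real.rpow_nonneg hlog0 θ)
    have hterm : ∀ m ∈ Icc 1 M,
        |f m * (((⌊x/(m:ℝ)⌋₊ : ℝ) - (⌊x/((m:ℝ)+1)⌋₊ : ℝ)) - x/((m:ℝ)*((m:ℝ)+1)))|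
        ≤ K * (M:ℝ)^α * ((2:ℝ)^θ * (Real.log x)^θ) := by
      intro m hm
      rw [mem_Icc] at hm
      have hm1r : (1:ℝ) ≤ m := by exact_mod_cast hm.1
      have hmM : (m:ℝ) ≤ M := by exact_mod_cast hm.2
      rw [abs_mul]
      calc |f m| * |(((⌊x/(m:ℝ)⌋₊ : ℝ) - (⌊x/((m:ℝ)+1)⌋₊ : ℝ)) - x/((m:ℝ)*((m:ℝ)+1)))|
          ≤ |f m| * 1 := mul_le_mul_of_nonneg_left (hΔ1 m hm.1) (abs_nonneg _)
      _ = |f m| := mul_one _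
      _ ≤ K * (m:ℝ)^α * (Real.log ((m:ℝ)+2))^θ := hf m hm.1
      _ ≤ K * (M:ℝ)^α * ((2:ℝ)^θ * (Real.log x)^θ) := by
          apply mul_le_mul
            (mul_le_mul_of_nonneg_left (Real.rpow_le_rpow (by linarith) hmM hα0) hK0)
          · calc (Real.log ((m:ℝ)+2))^θ ≤ (Real.log (x+2))^θ := by
                  apply Real.rpow_le_rpow (Real.log_nonneg (by linarith))
                    (Real.log_le_log (by linarith) (by linarith [hMx])) hθ
            _ ≤ (2:ℝ)^θ * (Real.log x)^θ := hlogx2θ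
          · exact Real.rpow_nonneg (Real.log_nonneg (by linarith)) θ
          · exact mul_nonneg hK0 (Real.rpow_nonneg (Nat.cast_nonneg M) α)
    have hMMα : (M:ℝ) * (M:ℝ)^α ≤ x^((1+α)/2) := by
      have h1 : (M:ℝ)^α ≤ s^α := Real.rpow_le_rpow (Nat.cast_nonneg M) hMr hα0
      have h2 : (M:ℝ) * (M:ℝ)^α ≤ s * s^α :=
        mul_le_mul hMr h1 (Real.rpow_nonneg (Nat.cast_nonneg M) α) hs0.le
      have h3 : s * s^α = s^(1+α) := by
        rw [Real.rpow_add hs0, Real.rpow_one]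
      have h4 : s^(1+α) = x^((1+α)/2) := by rw [hsexp (1+α)]
      linarith
    calc |∑ m ∈ Icc 1 M, f m * (((⌊x/(m:ℝ)⌋₊ : ℝ) - (⌊x/((m:ℝ)+1)⌋₊ : ℝ)) - x/((m:ℝ)*((m:ℝ)+1)))|
        ≤ ∑ m ∈ Icc 1 M, |f m * (((⌊x/(m:ℝ)⌋₊ : ℝ) - (⌊x/((m:ℝ)+1)⌋₊ : ℝ)) - x/((m:ℝ)*((m:ℝ)+1)))| :=
          Finset.abs_sum_le_sum_abs _ _
    _ ≤ ∑ _m ∈ Icc 1 M, K * (M:ℝ)^α * ((2:ℝ)^θ * (Real.log x)^θ) := Finset.sum_le_sum hterm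
    _ = (M:ℝ) * (K * (M:ℝ)^α * ((2:ℝ)^θ * (Real.log x)^θ)) := by
          rw [Finset.sum_const, Nat.card_Icc, nsmul_eq_mul]
          norm_num
    _ ≤ (K * (2:ℝ)^θ) * P := by
          rw [hP]
          have hcc : (0:ℝ) ≤ K * (2:ℝ)^θ * (Real.log x)^θ :=
            mul_nonneg (mul_nonneg hK0 (Real.rpow_nonneg (by norm_num) θ)) (Real.rpow_nonneg hlog0 θ)
          have hmul : (K * (2:ℝ)^θ * (Real.log x)^θ) * ((M:ℝ) * (M:ℝ)^α)
              ≤ (K * (2:ℝ)^θ * (Real.log x)^θ) * x^((1+α)/2) :=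
            mul_le_mul_of_nonneg_left hMMα hcc
          calc (M:ℝ) * (K * (M:ℝ)^α * ((2:ℝ)^θ * (Real.log x)^θ))
              = (K * (2:ℝ)^θ * (Real.log x)^θ) * ((M:ℝ) * (M:ℝ)^α) := by ring
          _ ≤ (K * (2:ℝ)^θ * (Real.log x)^θ) * x^((1+α)/2) := hmul
          _ = K * (2:ℝ)^θ * (x^((1+α)/2) * (Real.log x)^θ) := by ring
  -- tail bounds
  set N₂ := M*M*M*M with hN₂def
  have hMN₂ : M ≤ N₂ := by
    have hk : 0 < M*M*M := by positivity
    exact Nat.le_mul_of_pos_left M hk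
  have hN₂1 : 1 ≤ N₂ := by omega
  set L := N₂ - M with hLdef
  have hL : L + (M+1) = N₂+1 := by omega
  have hN2cast : (N₂:ℝ) = ((M:ℝ))^(4:ℕ) := by
    rw [hN₂def]
    push_cast
    ring
  have hMreal : (4:ℝ) ≤ (M:ℝ) := by exact_mod_cast hM4
  have hN₂r : (1:ℝ) ≤ (N₂:ℝ) := by exact_mod_cast hN₂1
  have hlogN2 : Real.log ((N₂:ℝ)+2) ≤ 5 * Real.log x := by
    have h1 : ((N₂:ℝ)) + 2 ≤ (M:ℝ)^(5:ℕ) := by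
      rw [hN2cast]
      have h256 : (4:ℝ)^(4:ℕ) ≤ (M:ℝ)^(4:ℕ) := pow_le_pow_left₀ (by norm_num) hMreal 4
      have hpnn : (0:ℝ) ≤ (M:ℝ)^(4:ℕ) := by positivity
      have hprod : (M:ℝ)^(4:ℕ) * 4 ≤ (M:ℝ)^(4:ℕ) * M := mul_le_mul_of_nonneg_left hMreal hpnn
      have he : (M:ℝ)^(5:ℕ) = (M:ℝ)^(4:ℕ) * M := by ring
      norm_num at h256
      linarith
    calc Real.log ((N₂:ℝ)+2) ≤ Real.log ((M:ℝ)^(5:ℕ)) := Real.log_le_log (by linarith) h1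
    _ = 5 * Real.log (M:ℝ) := by rw [Real.log_pow]; norm_num
    _ ≤ 5 * Real.log x := by
        have := Real.log_le_log hM0 hMx
        linarith
  have habs_shift : Summable (fun n => |g (n + (M+1))|) := (summable_nat_add_iff (M+1)).mpr hsum_abs
  have htail_abs : |∑' n, g (n + (M+1))| ≤ ∑' n, |g (n + (M+1))| := by
    calc |∑' n, g (n + (M+1))| = ‖∑' n, g (n + (M+1))‖ := (Real.norm_eq_abs _).symm
    _ ≤ ∑' n, ‖g (n + (M+1))‖ :=
        norm_tsum_le_tsum_norm (by simpa [Real.norm_eq_abs] using habs_shift)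
    _ = ∑' n, |g (n + (M+1))| := by simp [Real.norm_eq_abs]
  have hsplit2 : ∑' n, |g (n + (M+1))|
      = (∑ i ∈ Finset.range L, |g (i + (M+1))|) + ∑' n, |g (n + L + (M+1))| := by
    rw [← Summable.sum_add_tsum_nat_add L habs_shift]
  have hK5L : (0:ℝ) ≤ K * ((5:ℝ)^θ * (Real.log x)^θ) :=
    mul_nonneg hK0 (mul_nonneg (Real.rpow_nonneg (by norm_num) θ) (Real.rpow_nonneg hlog0 θ))
  have hchunk1 : (∑ i ∈ Finset.range L, |g (i + (M+1))|)
      ≤ (K * ((5:ℝ)^θ * (Real.log x)^θ)) * ((M:ℝ)^(α-1)/(1-α)) := by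
    have hterm1 : ∀ i ∈ Finset.range L, |g (i + (M+1))|
        ≤ (K * ((5:ℝ)^θ * (Real.log x)^θ)) * ((i + (M+1):ℕ):ℝ)^(α-2) := by
      intro i hi
      rw [Finset.mem_range] at hi
      set m := i + (M+1) with hmdef
      have hm1 : 1 ≤ m := by omega
      have hm1r : (1:ℝ) ≤ m := by exact_mod_cast hm1
      have hm0 : (0:ℝ) < m := by linarith
      have hmN2 : (m:ℝ) ≤ N₂ := by
        have : m ≤ N₂ := by omega
        exact_mod_cast this
      have hlogm : (Real.log ((m:ℝ)+2))^θ ≤ (5:ℝ)^θ * (Real.log x)^θ := by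
        calc (Real.log ((m:ℝ)+2))^θ ≤ (5*Real.log x)^θ := by
              apply Real.rpow_le_rpow (Real.log_nonneg (by linarith)) ?_ hθ
              calc Real.log ((m:ℝ)+2) ≤ Real.log ((N₂:ℝ)+2) :=
                    Real.log_le_log (by linarith) (by linarith)
              _ ≤ 5*Real.log x := hlogN2
        _ = (5:ℝ)^θ * (Real.log x)^θ := Real.mul_rpow (by norm_num) hlog0
      have hd : (0:ℝ) < (m:ℝ)*((m:ℝ)+1) := by positivity
      have h1 : |g m| = |f m| / ((m:ℝ)*((m:ℝ)+1)) := by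
        simp only [hg]
        rw [abs_div, abs_of_pos hd]
      have h2 : |f m| ≤ K * (m:ℝ)^α * ((5:ℝ)^θ * (Real.log x)^θ) :=
        (hf m hm1).trans (mul_le_mul_of_nonneg_left hlogm
          (mul_nonneg hK0 (Real.rpow_nonneg hm0.le α)))
      have h3 : |f m|/((m:ℝ)*((m:ℝ)+1)) ≤ (K * (m:ℝ)^α * ((5:ℝ)^θ * (Real.log x)^θ))/((m:ℝ)*(m:ℝ)) := by
        apply div_le_div₀ ?_ h2 (by positivity)
          (mul_le_mul_of_nonneg_left (by linarith : (m:ℝ) ≤ (m:ℝ)+1) hm0.le)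
        exact mul_nonneg (mul_nonneg hK0 (Real.rpow_nonneg hm0.le α)) (mul_nonneg (Real.rpow_nonneg (by norm_num) θ) (Real.rpow_nonneg hlog0 θ))
      have h4 : (K * (m:ℝ)^α * ((5:ℝ)^θ * (Real.log x)^θ))/((m:ℝ)*(m:ℝ))
          = (K * ((5:ℝ)^θ * (Real.log x)^θ)) * (m:ℝ)^(α-2) := by
        rw [Real.rpow_sub hm0, show ((2:ℝ)) = ((2:ℕ):ℝ) from by norm_num, Real.rpow_natCast]
        field_simp
      rw [h1]
      exact h3.trans (le_of_eq h4)
    calc ∑ i ∈ Finset.range L, |g (i + (M+1))|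
        ≤ ∑ i ∈ Finset.range L, (K * ((5:ℝ)^θ * (Real.log x)^θ)) * ((i + (M+1):ℕ):ℝ)^(α-2) :=
          Finset.sum_le_sum hterm1
    _ = (K * ((5:ℝ)^θ * (Real.log x)^θ)) * ∑ i ∈ Finset.range L, ((i + (M+1):ℕ):ℝ)^(α-2) := by
          rw [← Finset.mul_sum]
    _ ≤ (K * ((5:ℝ)^θ * (Real.log x)^θ)) * ∑' i : ℕ, ((i + (M+1):ℕ):ℝ)^(α-2) := by
          apply mul_le_mul_of_nonneg_left _ hK5L
          exact Summable.sum_le_tsum _ (fun i _ => Real.rpow_nonneg (Nat.cast_nonneg _) _)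
            (tail_summable (by linarith) (M+1))
    _ ≤ (K * ((5:ℝ)^θ * (Real.log x)^θ)) * ((M:ℝ)^(α-2+1)/(-(α-2+1))) := by
          apply mul_le_mul_of_nonneg_left _ hK5L
          exact tail_rpow_le (by linarith) (by linarith) hM1
    _ = (K * ((5:ℝ)^θ * (Real.log x)^θ)) * ((M:ℝ)^(α-1)/(1-α)) := by
          rw [show α-2+1 = α-1 by ring, show -(α-1) = 1-α by ring]
  have hchunk2 : (∑' n, |g (n + L + (M+1))|)
      ≤ (K*B) * ((N₂:ℝ)^((α-1)/2) * (2/(1-α))) := by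
    have h0 : ∑' n, |g (n + L + (M+1))| = ∑' n, |g (n + (N₂+1))| :=
      tsum_congr (fun n => by rw [show n + L + (M+1) = n + (N₂+1) by omega])
    rw [h0]
    calc ∑' n, |g (n + (N₂+1))|
        ≤ ∑' n, (K*B) * ((n + (N₂+1):ℕ):ℝ)^(α-2+(1-α)/2) := by
          apply Summable.tsum_le_tsum (fun n => habs _) ((summable_nat_add_iff (N₂+1)).mpr hsum_abs)
          exact (tail_summable hpδ1 (N₂+1)).mul_left (K*B)
    _ = (K*B) * ∑' n : ℕ, ((n + (N₂+1):ℕ):ℝ)^(α-2+(1-α)/2) := tsum_mul_left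
    _ ≤ (K*B) * ((N₂:ℝ)^((α-2+(1-α)/2)+1) / (-(α-2+(1-α)/2+1))) := by
          apply mul_le_mul_of_nonneg_left _ (mul_nonneg hK0 hB0)
          exact tail_rpow_le (by linarith) hpδ1 hN₂1
    _ = (K*B) * ((N₂:ℝ)^((α-1)/2) * (2/(1-α))) := by
          rw [show α-2+(1-α)/2+1 = (α-1)/2 by ring]
          rw [show -((α-1)/2) = (1-α)/2 by ring]
          rw [div_div_eq_mul_div, div_eq_mul_inv, mul_comm ((N₂:ℝ)^((α-1)/2) * 2)]
          rw [show (2:ℝ)/(1-α) = 2 * (1-α)⁻¹ by rw [div_eq_mul_inv]]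
          ring
  -- geometric facts
  have hN2x : x*x/16 ≤ (N₂:ℝ) := by
    have h1 : (s/2)^(4:ℕ) ≤ ((M:ℝ))^(4:ℕ) := pow_le_pow_left₀ (by positivity) hMhalf 4
    have h2 : (s/2)^(4:ℕ) = (s*s)*(s*s)/16 := by ring
    rw [h2, hss] at h1
    rw [hN2cast]
    linarith
  have hN2exp : (N₂:ℝ)^((α-1)/2) ≤ 16 * x^(α-1) := by
    have hx216 : (0:ℝ) < x*x/16 := by positivity
    have h1 : (N₂:ℝ)^((α-1)/2) ≤ (x*x/16)^((α-1)/2) :=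
      Real.rpow_le_rpow_of_nonpos hx216 hN2x (by linarith)
    have e1 : (x*x/16)^((α-1)/2) = (x*x)^((α-1)/2) / (16:ℝ)^((α-1)/2) :=
      Real.div_rpow (by positivity) (by norm_num) _
    have e2 : (x*x)^((α-1)/2) = x^(α-1) := by
      rw [show x*x = x^(2:ℕ) by ring, ← Real.rpow_natCast x 2, ← Real.rpow_mul hx0.le]
      congr 1
      push_cast
      ring
    have e3 : (1:ℝ)/16 ≤ (16:ℝ)^((α-1)/2) := by
      calc (1:ℝ)/16 = (16:ℝ)^(-(1:ℝ)) := by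
            rw [Real.rpow_neg (by norm_num), Real.rpow_one]
            norm_num
      _ ≤ (16:ℝ)^((α-1)/2) := Real.rpow_le_rpow_of_exponent_le (by norm_num) (by linarith)
    have e4 : (0:ℝ) < (16:ℝ)^((α-1)/2) := Real.rpow_pos_of_pos (by norm_num) _
    have hxa : (0:ℝ) ≤ x^(α-1) := Real.rpow_nonneg hx0.le _
    rw [e1, e2] at h1
    have h2 : x^(α-1) / (16:ℝ)^((α-1)/2) ≤ 16 * x^(α-1) := by
      rw [div_le_iff₀ e4]
      calc x^(α-1) = (16 * x^(α-1))*(1/16) := by ring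
      _ ≤ (16 * x^(α-1))*((16:ℝ)^((α-1)/2)) := by
          apply mul_le_mul_of_nonneg_left e3 (by positivity)
      _ = 16 * x^(α-1) * (16:ℝ)^((α-1)/2) := by ring
    linarith
  have hxs : x * (M:ℝ)^(α-1) ≤ 2 * x^((1+α)/2) := by
    have h1 : (M:ℝ)^(α-1) ≤ (s/2)^(α-1) :=
      Real.rpow_le_rpow_of_nonpos (by positivity) hMhalf (by linarith)
    have h2 : (s/2)^(α-1) = s^(α-1) * (2:ℝ)^(1-α) := by
      rw [Real.div_rpow hs0.le (by norm_num)]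
      rw [show (1-α) = -(α-1) by ring, Real.rpow_neg (by norm_num)]
      rw [div_eq_mul_inv]
    have h3 : (2:ℝ)^(1-α) ≤ 2 := by
      calc (2:ℝ)^(1-α) ≤ (2:ℝ)^(1:ℝ) :=
            Real.rpow_le_rpow_of_exponent_le (by norm_num) (by linarith)
      _ = 2 := Real.rpow_one 2
    have h4 : x * s^(α-1) = x^((1+α)/2) := by
      rw [hsexp (α-1)]
      rw [show x * x^((α-1)/2) = x^(1:ℝ) * x^((α-1)/2) by rw [Real.rpow_one]]
      rw [← Real.rpow_add hx0, show (1:ℝ)+(α-1)/2 = (1+α)/2 by ring]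
    have h5 : (0:ℝ) ≤ s^(α-1) := Real.rpow_nonneg hs0.le _
    have h6 : x * (M:ℝ)^(α-1) ≤ x * (s^(α-1) * (2:ℝ)^(1-α)) := by
      apply mul_le_mul_of_nonneg_left _ hx0.le
      rw [← h2]
      exact h1
    have h7 : x * (s^(α-1) * (2:ℝ)^(1-α)) ≤ x * (s^(α-1) * 2) := by
      apply mul_le_mul_of_nonneg_left _ hx0.le
      exact mul_le_mul_of_nonneg_left h3 h5
    have h8 : x * (s^(α-1) * 2) = 2 * (x * s^(α-1)) := by ring
    rw [h8, h4] at h7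
    linarith
  have hxα : x * x^(α-1) = x^α := by
    rw [show x * x^(α-1) = x^(1:ℝ) * x^(α-1) by rw [Real.rpow_one]]
    rw [← Real.rpow_add hx0, show (1:ℝ)+(α-1) = α by ring]
  have hxαle : x^α ≤ x^((1+α)/2) := Real.rpow_le_rpow_of_exponent_le hx1 (by linarith)
  -- tail * x
  have htail_bound : |∑' n, g (n + (M+1))| * x
      ≤ (K * (5:ℝ)^θ * 2/(1-α)) * P + (32*K*B/(1-α)) * P := by
    have hb : |∑' n, g (n + (M+1))|
        ≤ (K * ((5:ℝ)^θ * (Real.log x)^θ)) * ((M:ℝ)^(α-1)/(1-α))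
          + (K*B) * ((N₂:ℝ)^((α-1)/2) * (2/(1-α))) := by
      calc |∑' n, g (n + (M+1))| ≤ ∑' n, |g (n + (M+1))| := htail_abs
      _ = (∑ i ∈ Finset.range L, |g (i + (M+1))|) + ∑' n, |g (n + L + (M+1))| := hsplit2
      _ ≤ _ := add_le_add hchunk1 hchunk2
    have hr1 : (K * ((5:ℝ)^θ * (Real.log x)^θ)) * ((M:ℝ)^(α-1)/(1-α)) * x
        ≤ (K * (5:ℝ)^θ * 2/(1-α)) * P := by
      have hcc : (0:ℝ) ≤ K * (5:ℝ)^θ * (Real.log x)^θ/(1-α) := by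
        apply div_nonneg _ (by linarith)
        exact mul_nonneg (mul_nonneg hK0 (Real.rpow_nonneg (by norm_num) θ)) (Real.rpow_nonneg hlog0 θ)
      calc (K * ((5:ℝ)^θ * (Real.log x)^θ)) * ((M:ℝ)^(α-1)/(1-α)) * x
          = (K * (5:ℝ)^θ * (Real.log x)^θ/(1-α)) * (x * (M:ℝ)^(α-1)) := by ring
      _ ≤ (K * (5:ℝ)^θ * (Real.log x)^θ/(1-α)) * (2 * x^((1+α)/2)) :=
          mul_le_mul_of_nonneg_left hxs hcc
      _ = (K * (5:ℝ)^θ * 2/(1-α)) * P := by rw [hP]; ring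
    have hr2 : (K*B) * ((N₂:ℝ)^((α-1)/2) * (2/(1-α))) * x ≤ (32*K*B/(1-α)) * P := by
      have hcc2 : (0:ℝ) ≤ 2*K*B/(1-α) := by
        apply div_nonneg _ (by linarith)
        exact mul_nonneg (mul_nonneg (by norm_num) hK0) hB0
      calc (K*B) * ((N₂:ℝ)^((α-1)/2) * (2/(1-α))) * x
          = (2*K*B/(1-α)) * (x * (N₂:ℝ)^((α-1)/2)) := by ring
      _ ≤ (2*K*B/(1-α)) * (x * (16 * x^(α-1))) := by
          apply mul_le_mul_of_nonneg_left _ hcc2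
          exact mul_le_mul_of_nonneg_left hN2exp hx0.le
      _ = (32*K*B/(1-α)) * (x * x^(α-1)) := by ring
      _ = (32*K*B/(1-α)) * x^α := by rw [hxα]
      _ ≤ (32*K*B/(1-α)) * x^((1+α)/2) := by
          apply mul_le_mul_of_nonneg_left hxαle
          apply div_nonneg _ (by linarith)
          exact mul_nonneg (mul_nonneg (by norm_num) hK0) hB0
      _ ≤ (32*K*B/(1-α)) * P := by
          rw [hP]
          have hc3 : (0:ℝ) ≤ 32*K*B/(1-α) := by
            apply div_nonneg _ (by linarith)
            exact mul_nonneg (mul_nonneg (by norm_num) hK0) hB0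
          have : x^((1+α)/2) ≤ x^((1+α)/2) * (Real.log x)^θ :=
            le_mul_of_one_le_right hxP.le hlogθ
          exact mul_le_mul_of_nonneg_left this hc3
    have hx' := mul_le_mul_of_nonneg_right hb hx0.le
    calc |∑' n, g (n + (M+1))| * x
        ≤ ((K * ((5:ℝ)^θ * (Real.log x)^θ)) * ((M:ℝ)^(α-1)/(1-α))
          + (K*B) * ((N₂:ℝ)^((α-1)/2) * (2/(1-α)))) * x := hx'
    _ = (K * ((5:ℝ)^θ * (Real.log x)^θ)) * ((M:ℝ)^(α-1)/(1-α)) * x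
          + (K*B) * ((N₂:ℝ)^((α-1)/2) * (2/(1-α))) * x := by ring
    _ ≤ (K * (5:ℝ)^θ * 2/(1-α)) * P + (32*K*B/(1-α)) * P := add_le_add hr1 hr2
  -- final assembly
  rw [hCg, hD]
  have habs3 : |∑ n ∈ Ioc 0 A, f ⌊x/(n:ℝ)⌋₊
      + ∑ m ∈ Icc 1 M, f m * (((⌊x/(m:ℝ)⌋₊ : ℝ) - (⌊x/((m:ℝ)+1)⌋₊ : ℝ)) - x/((m:ℝ)*((m:ℝ)+1)))
      - (∑' n, g (n + (M+1))) * x|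
      ≤ |∑ n ∈ Ioc 0 A, f ⌊x/(n:ℝ)⌋₊|
        + |∑ m ∈ Icc 1 M, f m * (((⌊x/(m:ℝ)⌋₊ : ℝ) - (⌊x/((m:ℝ)+1)⌋₊ : ℝ)) - x/((m:ℝ)*((m:ℝ)+1)))|
        + |∑' n, g (n + (M+1))| * x := by
    have t1 := abs_add_le (∑ n ∈ Ioc 0 A, f ⌊x/(n:ℝ)⌋₊)
      (∑ m ∈ Icc 1 M, f m * (((⌊x/(m:ℝ)⌋₊ : ℝ) - (⌊x/((m:ℝ)+1)⌋₊ : ℝ)) - x/((m:ℝ)*((m:ℝ)+1))))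
    have t2 := abs_sub (∑ n ∈ Ioc 0 A, f ⌊x/(n:ℝ)⌋₊
      + ∑ m ∈ Icc 1 M, f m * (((⌊x/(m:ℝ)⌋₊ : ℝ) - (⌊x/((m:ℝ)+1)⌋₊ : ℝ)) - x/((m:ℝ)*((m:ℝ)+1))))
      ((∑' n, g (n + (M+1))) * x)
    have t3 : |(∑' n, g (n + (M+1))) * x| = |∑' n, g (n + (M+1))| * x := by
      rw [abs_mul, abs_of_pos hx0]
    calc |∑ n ∈ Ioc 0 A, f ⌊x/(n:ℝ)⌋₊
        + ∑ m ∈ Icc 1 M, f m * (((⌊x/(m:ℝ)⌋₊ : ℝ) - (⌊x/((m:ℝ)+1)⌋₊ : ℝ)) - x/((m:ℝ)*((m:ℝ)+1)))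
        - (∑' n, g (n + (M+1))) * x|
        ≤ |∑ n ∈ Ioc 0 A, f ⌊x/(n:ℝ)⌋₊
          + ∑ m ∈ Icc 1 M, f m * (((⌊x/(m:ℝ)⌋₊ : ℝ) - (⌊x/((m:ℝ)+1)⌋₊ : ℝ)) - x/((m:ℝ)*((m:ℝ)+1)))|
          + |(∑' n, g (n + (M+1))) * x| := abs_sub _ _
    _ = |∑ n ∈ Ioc 0 A, f ⌊x/(n:ℝ)⌋₊
          + ∑ m ∈ Icc 1 M, f m * (((⌊x/(m:ℝ)⌋₊ : ℝ) - (⌊x/((m:ℝ)+1)⌋₊ : ℝ)) - x/((m:ℝ)*((m:ℝ)+1)))|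
          + |∑' n, g (n + (M+1))| * x := by rw [t3]
    _ ≤ |∑ n ∈ Ioc 0 A, f ⌊x/(n:ℝ)⌋₊|
          + |∑ m ∈ Icc 1 M, f m * (((⌊x/(m:ℝ)⌋₊ : ℝ) - (⌊x/((m:ℝ)+1)⌋₊ : ℝ)) - x/((m:ℝ)*((m:ℝ)+1)))|
          + |∑' n, g (n + (M+1))| * x := add_le_add_left t1 _
  calc |∑ n ∈ Ioc 0 A, f ⌊x/(n:ℝ)⌋₊
      + ∑ m ∈ Icc 1 M, f m * (((⌊x/(m:ℝ)⌋₊ : ℝ) - (⌊x/((m:ℝ)+1)⌋₊ : ℝ)) - x/((m:ℝ)*((m:ℝ)+1)))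
      - (∑' n, g (n + (M+1))) * x|
      ≤ |∑ n ∈ Ioc 0 A, f ⌊x/(n:ℝ)⌋₊|
        + |∑ m ∈ Icc 1 M, f m * (((⌊x/(m:ℝ)⌋₊ : ℝ) - (⌊x/((m:ℝ)+1)⌋₊ : ℝ)) - x/((m:ℝ)*((m:ℝ)+1)))|
        + |∑' n, g (n + (M+1))| * x := habs3
  _ ≤ (K * (2:ℝ)^θ / (1-α)) * P + (K * (2:ℝ)^θ) * P
        + ((K * (5:ℝ)^θ * 2/(1-α)) * P + (32*K*B/(1-α)) * P) :=
      add_le_add (add_le_add hT1 hT2) htail_bound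
  _ = (K * (2:ℝ)^θ / (1-α) + K * (2:ℝ)^θ + K * (5:ℝ)^θ * 2 / (1-α) + 32*K*B/(1-α))
        * x^((1+α)/2) * (Real.log x)^θ := by
      rw [hP]
      ring

/-- The hyperbola-method estimate of Wu and Zhai: if
    `|f(n)| ≤ K n^α (log(n+2))^θ` with `α ∈ [0,1)` and `θ ≥ 0`, then
    `S_f(x) = C_f·x + O(x^{(1+α)/2} (log x)^θ)`. In particular, if
    `f(n) ≪ n^ε` for every `ε > 0`, then `S_f(x) = C_f·x + O(x^{1/2+ε})`
    for every `ε > 0`. -/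
theorem hyperbola_method (f : ℕ → ℝ) (K α θ : ℝ)
    (hα0 : 0 ≤ α) (hα1 : α < 1) (hθ : 0 ≤ θ)
    (hf : ∀ n : ℕ, 1 ≤ n → |f n| ≤ K * (n : ℝ) ^ α * (Real.log ((n : ℝ) + 2)) ^ θ) :
    (∃ C X : ℝ, ∀ x : ℝ, X ≤ x →
      |(∑ n ∈ Finset.Icc 1 ⌊x⌋₊, f (Nat.floor (x / (n : ℝ)))) -
        (∑' n : ℕ, f (n + 1) / ((n + 1) * (n + 2))) * x|
        ≤ C * x ^ ((1 + α) / 2) * (Real.log x) ^ θ) ∧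
    ((∀ ε : ℝ, 0 < ε → ∃ K' : ℝ, ∀ n : ℕ, 1 ≤ n → |f n| ≤ K' * (n : ℝ) ^ ε) →
      ∀ ε : ℝ, 0 < ε → ∃ C X : ℝ, ∀ x : ℝ, X ≤ x →
        |(∑ n ∈ Finset.Icc 1 ⌊x⌋₊, f (Nat.floor (x / (n : ℝ)))) -
          (∑' n : ℕ, f (n + 1) / ((n + 1) * (n + 2))) * x|
          ≤ C * x ^ ((1 : ℝ) / 2 + ε)) := by
  constructor
  · exact hyp_aux f K α θ hα0 hα1 hθ hf
  · intro h ε hε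
    set ε' := min ε (1/2) with hε'def
    have hε'0 : 0 < ε' := lt_min hε (by norm_num)
    have hε'1 : ε' < 1 := lt_of_le_of_lt (min_le_right _ _) (by norm_num)
    obtain ⟨K', hK'⟩ := h ε' hε'0
    have hf' : ∀ n : ℕ, 1 ≤ n → |f n| ≤ K' * (n:ℝ)^ε' * (Real.log ((n:ℝ)+2))^(0:ℝ) := by
      intro n hn
      rw [Real.rpow_zero, mul_one]
      exact hK' n hn
    obtain ⟨C, X, hCX⟩ := hyp_aux f K' ε' 0 hε'0.le hε'1 le_rfl hf'
    refine ⟨max C 0, max X 1, fun x hx => ?_⟩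
    have hx1 : (1:ℝ) ≤ x := le_trans (le_max_right _ _) hx
    have hxX : X ≤ x := le_trans (le_max_left _ _) hx
    have h1 := hCX x hxX
    rw [Real.rpow_zero, mul_one] at h1
    have h2 : x^((1+ε')/2) ≤ x^((1:ℝ)/2+ε) := by
      apply Real.rpow_le_rpow_of_exponent_le hx1
      have : ε' ≤ ε := min_le_left _ _
      linarith
    have hxnn : (0:ℝ) ≤ x^((1+ε')/2) := Real.rpow_nonneg (by linarith) _
    calc |(∑ n ∈ Finset.Icc 1 ⌊x⌋₊, f (Nat.floor (x / (n : ℝ)))) -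
        (∑' n : ℕ, f (n + 1) / ((n + 1) * (n + 2))) * x|
        ≤ C * x^((1+ε')/2) := h1
    _ ≤ max C 0 * x^((1+ε')/2) := mul_le_mul_of_nonneg_right (le_max_left _ _) hxnn
    _ ≤ max C 0 * x^((1:ℝ)/2+ε) := mul_le_mul_of_nonneg_left h2 (le_max_right _ _)
end
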